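/- Let K = Q(α) with α^3 - α^2 - 82α + 64 = 0, and E_0 : y^2 + (1-c)xy - by = x^3 - bx^2 with b = (10α^2 + 90α - 1936)/19773, c = (6α^2 + 50α - 208)/1521. Then the point P = (0,0) lies on E_0 and 6·P ≠ O, 4·P ≠ O (so the order of P does not divide 12). -/

import Mathlib

/-!
In Tate normal form `y² + (1 - c)xy - by = x³ - bx²` the point `P = (0, 0)` has
`2P = (b, bc)` and `3P = (c, b - c)`. Hence `4P = 3P + P ≠ O` as soon as `c ≠ 0`, since the
two summands have different `x`-coordinates, and `6P = 2(3P) ≠ O` as soon as `b - c ≠ c²`,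
the `y`-coordinate of `-3P`. Over `K = ℚ(α)` the conditions `b ≠ 0`, `c ≠ 0`, `b - c ≠ c²`
reduce modulo the minimal polynomial of `α` to the nonvanishing of nonzero quadratics in `α`.
-/

open Polynomial

namespace WeierstrassCurve.Affine

lemma Point.exists_some_add_some_eq {F : Type*} [Field F] [DecidableEq F]
    {W : WeierstrassCurve.Affine F} {x₁ x₂ y₁ y₂ x₃ y₃ : F} {h₁ : W.Nonsingular x₁ y₁}
    {h₂ : W.Nonsingular x₂ y₂} (hxy : ¬(x₁ = x₂ ∧ y₁ = W.negY x₂ y₂))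
    (hx₃ : W.addX x₁ x₂ (W.slope x₁ x₂ y₁ y₂) = x₃)
    (hy₃ : W.addY x₁ x₂ y₁ (W.slope x₁ x₂ y₁ y₂) = y₃) :
    ∃ h₃ : W.Nonsingular x₃ y₃, Point.some _ _ h₁ + Point.some _ _ h₂ = Point.some _ _ h₃ := by
  subst hx₃ hy₃
  exact ⟨_, Point.add_some hxy⟩

variable {F : Type*} [Field F]

abbrev tateNormalForm (b c : F) : WeierstrassCurve.Affine F := ⟨1 - c, -b, -b, 0, 0⟩

variable {b c : F}

lemma tateNormalForm_nonsingular_zero (hb : b ≠ 0) : (tateNormalForm b c).Nonsingular 0 0 :=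
  nonsingular_zero.mpr ⟨rfl, .inl (neg_ne_zero.mpr hb)⟩

lemma tateNormalForm_negY (x y : F) : (tateNormalForm b c).negY x y = -y - (1 - c) * x + b := by
  simp only [negY]; ring

variable [DecidableEq F]

lemma tateNormalForm_exists_two_nsmul_eq_some (hb : b ≠ 0)
    (h : (tateNormalForm b c).Nonsingular 0 0) :
    ∃ h₂ : (tateNormalForm b c).Nonsingular b (b * c),
      2 • Point.some _ _ h = Point.some _ _ h₂ := by
  have hy : (0 : F) ≠ (tateNormalForm b c).negY 0 0 := by
    rw [tateNormalForm_negY]; simpa using hb.symm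
  have hslope : (tateNormalForm b c).slope 0 0 0 0 = 0 := by
    rw [slope_of_Y_ne rfl hy]; simp
  rw [two_nsmul]
  refine Point.exists_some_add_some_eq (fun hxy => hy hxy.2) ?_ ?_ <;>
    simp only [hslope, addY, negAddY, addX, negY] <;> ring

lemma tateNormalForm_exists_three_nsmul_eq_some (hb : b ≠ 0)
    (h : (tateNormalForm b c).Nonsingular 0 0) :
    ∃ h₃ : (tateNormalForm b c).Nonsingular c (b - c),
      3 • Point.some _ _ h = Point.some _ _ h₃ := by
  obtain ⟨h₂, e₂⟩ := tateNormalForm_exists_two_nsmul_eq_some hb h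
  have hslope : (tateNormalForm b c).slope b 0 (b * c) 0 = c := by
    rw [slope_of_X_ne hb, sub_zero, sub_zero, mul_div_cancel_left₀ _ hb]
  rw [succ_nsmul, e₂]
  refine Point.exists_some_add_some_eq (fun hxy => hb hxy.1) ?_ ?_ <;>
    simp only [hslope, addY, negAddY, addX, negY] <;> ring

lemma tateNormalForm_four_nsmul_ne_zero (hb : b ≠ 0) (hc : c ≠ 0)
    (h : (tateNormalForm b c).Nonsingular 0 0) : 4 • Point.some _ _ h ≠ 0 := by
  obtain ⟨h₃, e₃⟩ := tateNormalForm_exists_three_nsmul_eq_some hb h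
  rw [succ_nsmul, e₃, Point.add_of_X_ne hc]
  exact Point.some_ne_zero _

lemma tateNormalForm_six_nsmul_ne_zero (hb : b ≠ 0) (hbc : b - c ≠ c ^ 2)
    (h : (tateNormalForm b c).Nonsingular 0 0) : 6 • Point.some _ _ h ≠ 0 := by
  obtain ⟨h₃, e₃⟩ := tateNormalForm_exists_three_nsmul_eq_some hb h
  have hy : b - c ≠ (tateNormalForm b c).negY c (b - c) := by
    rwa [tateNormalForm_negY, show -(b - c) - (1 - c) * c + b = c ^ 2 by ring]
  rw [show 6 = 3 + 3 from rfl, add_nsmul, e₃, Point.add_self_of_Y_ne hy]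
  exact Point.some_ne_zero _

end WeierstrassCurve.Affine

lemma AdjoinRoot.aeval_root_ne_zero_of_degree_lt {R : Type*} [CommRing R] {f p : R[X]}
    (hf : f.Monic) (hp : p ≠ 0) (hd : p.degree < f.degree) : aeval (root f) p ≠ 0 :=
  (aeval_eq p).trans_ne (mk_ne_zero_of_degree_lt hf hp hd)

open WeierstrassCurve.Affine

/-- On the elliptic curve `E₀ : y² + (1-c)xy - by = x³ - bx²` over `K = ℚ(α)` with
`α³ - α² - 82α + 64 = 0`, `b = (10α² + 90α - 1936)/19773`, `c = (6α² + 50α - 208)/1521`,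
the point `P = (0,0)` lies on `E₀` and `6·P ≠ O` and `4·P ≠ O` (so the order of `P` does not
divide `12`). -/
theorem stmt19 [Fact (Irreducible (X ^ 3 - X ^ 2 - 82 * X + 64 : ℚ[X]))] :
    let K := AdjoinRoot (X ^ 3 - X ^ 2 - 82 * X + 64 : ℚ[X])
    let α : K := AdjoinRoot.root _
    let b : K := (10 * α ^ 2 + 90 * α - 1936) / 19773
    let c : K := (6 * α ^ 2 + 50 * α - 208) / 1521
    let W : WeierstrassCurve.Affine K := ⟨1 - c, -b, -b, 0, 0⟩
    W.Equation 0 0 ∧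
    ∃ h : W.Nonsingular 0 0,
      6 • (WeierstrassCurve.Affine.Point.some _ _ h) ≠ 0 ∧
      4 • (WeierstrassCurve.Affine.Point.some _ _ h) ≠ 0 := by
  intro K α b c W
  have hα : aeval α (X ^ 3 - X ^ 2 - 82 * X + 64 : ℚ[X]) = 0 :=
    (AdjoinRoot.aeval_eq _).trans AdjoinRoot.mk_self
  have hquad {p : ℚ[X]} (hp : p.degree = 2) : aeval α p ≠ 0 :=
    AdjoinRoot.aeval_root_ne_zero_of_degree_lt (by monicity!) (by rintro rfl; simp at hp)
      (by rw [hp, show (X ^ 3 - X ^ 2 - 82 * X + 64 : ℚ[X]).degree = 3 by compute_degree!]; decide)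
  have hqb := hquad (p := 10 * X ^ 2 + 90 * X - 1936) (by compute_degree!)
  have hqc := hquad (p := 6 * X ^ 2 + 50 * X - 208) (by compute_degree!)
  have hqbc := hquad (p := -11548 * X ^ 2 - 94568 * X + 87296) (by compute_degree!)
  simp only [map_sub, map_add, map_mul, map_pow, map_neg, map_ofNat, aeval_X] at hα hqb hqc hqbc
  have hbc : b - c ≠ c ^ 2 := by
    contrapose! hqbc
    -- `1521² (b - c - c²)` reduced modulo the minimal polynomial of `α`
    linear_combination 2313441 * hqbc + (36 * α + 636) * hα
  have hb : b ≠ 0 := div_ne_zero hqb (by norm_num)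
  have h : W.Nonsingular 0 0 := tateNormalForm_nonsingular_zero hb
  exact ⟨h.1, h, tateNormalForm_six_nsmul_ne_zero hb hbc h,
    tateNormalForm_four_nsmul_ne_zero hb (div_ne_zero hqc (by norm_num)) h⟩
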